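/- Let β be a Parry number with Parry polynomial n*_β. If |N(β)| ≥ H(n*_β)/3, then every beta-conjugate of β which is not an algebraic unit is a simple root of n*_β. -/

import Mathlib

open Polynomial

noncomputable section

/-- Iterates `T_β^j(1)` of the beta-transformation `T_β(x) = βx - ⌊βx⌋` at `1`. -/
def Titer (β : ℝ) : ℕ → ℝ
  | 0 => 1
  | j + 1 => Int.fract (β * Titer β j)

/-- The digits `t_i = ⌊β · T_β^{i-1}(1)⌋` for `i ≥ 1` (junk value `0` at `i = 0`). -/
def tdigit (β : ℝ) : ℕ → ℤ
  | 0 => 0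
  | i + 1 => ⌊β * Titer β i⌋

/-- The Parry polynomial of a simple Parry number with `d_β(1) = 0.t₁…t_m`. -/
def simpleParryPoly (β : ℝ) (m : ℕ) : Polynomial ℤ :=
  X ^ m - ∑ i ∈ Finset.Icc 1 m, C (tdigit β i) * X ^ (m - i)

/-- The Parry polynomial of a non-simple Parry number with preperiod `m`, period `p+1`. -/
def nonsimpleParryPoly (β : ℝ) (m p : ℕ) : Polynomial ℤ :=
  X ^ (m + p + 1) - ∑ i ∈ Finset.Icc 1 (m + p + 1), C (tdigit β i) * X ^ (m + p + 1 - i)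
    - X ^ m + ∑ i ∈ Finset.Icc 1 m, C (tdigit β i) * X ^ (m - i)

/-- `β` is a Parry number (non-integer, `> 1`, with eventually periodic digit sequence
`(t_i)`) and `P` is its Parry polynomial: either `β` is a simple Parry number with
`d_β(1) = 0.t₁…t_m` (`m` maximal with `t_m ≠ 0`), or `β` is a non-simple Parry number with
minimal preperiod length `m ≥ 0` and minimal period length `p+1 ≥ 1`. -/
def IsParryPolyOf (β : ℝ) (P : Polynomial ℤ) : Prop :=
  1 < β ∧ (∀ n : ℤ, (n : ℝ) ≠ β) ∧
  ((∃ m : ℕ, 1 ≤ m ∧ tdigit β m ≠ 0 ∧ (∀ i, m < i → tdigit β i = 0) ∧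
      P = simpleParryPoly β m) ∨
   ((∀ N : ℕ, ∃ i, N < i ∧ tdigit β i ≠ 0) ∧
    ∃ m p : ℕ,
      (∀ i, m + 1 ≤ i → tdigit β (i + (p + 1)) = tdigit β i) ∧
      (∀ q : ℕ, 0 < q → (∃ m', ∀ i, m' + 1 ≤ i → tdigit β (i + q) = tdigit β i) →
        p + 1 ≤ q) ∧
      (∀ m', m' < m → ¬ (∀ i, m' + 1 ≤ i → tdigit β (i + (p + 1)) = tdigit β i)) ∧
      P = nonsimpleParryPoly β m p))

/-- The height of an integer polynomial: the maximum modulus of its coefficients. -/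
def polyHeight (P : Polynomial ℤ) : ℝ :=
  (Finset.range (P.natDegree + 1)).sup' ⟨0, Finset.mem_range.mpr (Nat.succ_pos _)⟩
    fun j => |(P.coeff j : ℝ)|

/-- The absolute value of the algebraic norm of `x`: the product of the absolute values
of all the roots (the conjugates of `x`) of its minimal polynomial. -/
def algNormAbs (x : ℂ) : ℝ :=
  ((((minpoly ℚ x).map (algebraMap ℚ ℂ)).roots).map (fun z => ‖z‖)).prod

lemma Titer_nonneg (β : ℝ) (j : ℕ) : 0 ≤ Titer β j := by
  cases j with
  | zero => norm_num [Titer]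
  | succ j => exact (Int.fract_nonneg _)

lemma Titer_le_one (β : ℝ) (j : ℕ) : Titer β j ≤ 1 := by
  cases j with
  | zero => norm_num [Titer]
  | succ j => exact le_of_lt (Int.fract_lt_one _)

lemma tdigit_nonneg {β : ℝ} (hβ : 0 < β) (i : ℕ) : 0 ≤ tdigit β i := by
  cases i with
  | zero => simp [tdigit]
  | succ i => exact Int.floor_nonneg.mpr (mul_nonneg hβ.le (Titer_nonneg β i))

lemma Titer_succ (β : ℝ) (j : ℕ) :
    Titer β (j + 1) = β * Titer β j - (tdigit β (j + 1) : ℝ) := by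
  show Int.fract (β * Titer β j) = _
  rw [Int.fract]
  simp [tdigit]

lemma Titer_add (β : ℝ) (n k : ℕ) :
    Titer β (n + k) = β ^ k * Titer β n
      - ∑ i ∈ Finset.Icc 1 k, (tdigit β (n + i) : ℝ) * β ^ (k - i) := by
  induction k with
  | zero => simp
  | succ k ih =>
      rw [show n + (k+1) = (n+k) + 1 by ring, Titer_succ, ih,
        Finset.sum_Icc_succ_top (by omega : 1 ≤ k + 1)]
      rw [mul_sub]
      rw [Finset.mul_sum]
      have h1 : ∀ i ∈ Finset.Icc 1 k, β * ((tdigit β (n + i) : ℝ) * β ^ (k - i))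
          = (tdigit β (n + i) : ℝ) * β ^ (k + 1 - i) := by
        intro i hi
        simp only [Finset.mem_Icc] at hi
        rw [show k + 1 - i = (k - i) + 1 by omega]
        ring
      rw [Finset.sum_congr rfl h1]
      simp only [show n + k + 1 = n + (k+1) by ring, Nat.sub_self, pow_zero, pow_succ]
      ring

lemma Titer_diff_small {β : ℝ} (hβ : 1 < β) {a b : ℕ}
    (h : ∀ k : ℕ, β ^ k * (Titer β a - Titer β b) = Titer β (a + k) - Titer β (b + k)) :
    Titer β a = Titer β b := by
  by_contra hne
  have hx : 0 < |Titer β a - Titer β b| := abs_pos.mpr (sub_ne_zero.mpr hne)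
  obtain ⟨k, hk⟩ := pow_unbounded_of_one_lt (|Titer β a - Titer β b|⁻¹) hβ
  have h1 : β ^ k * |Titer β a - Titer β b| ≤ 1 := by
    rw [← abs_of_pos (a := β ^ k) (by positivity), ← abs_mul, h k]
    have := Titer_nonneg β (a+k); have := Titer_le_one β (a+k)
    have := Titer_nonneg β (b+k); have := Titer_le_one β (b+k)
    rw [abs_le]; constructor <;> linarith
  have h2 : 1 < β ^ k * |Titer β a - Titer β b| := by
    rw [← inv_lt_iff_one_lt_mul₀ hx] at *
    · exact hk
  linarith

lemma Titer_periodic {β : ℝ} (hβ : 1 < β) {m p : ℕ}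
    (hper : ∀ i, m + 1 ≤ i → tdigit β (i + (p + 1)) = tdigit β i) :
    Titer β m = Titer β (m + p + 1) := by
  apply Titer_diff_small hβ
  intro k
  rw [Titer_add β m k, show m + p + 1 + k = (m + p + 1) + k from rfl,
    Titer_add β (m + p + 1) k]
  have hsum : ∀ i ∈ Finset.Icc 1 k, (tdigit β (m + p + 1 + i) : ℝ) * β ^ (k - i)
      = (tdigit β (m + i) : ℝ) * β ^ (k - i) := by
    intro i hi
    simp only [Finset.mem_Icc] at hi
    rw [show m + p + 1 + i = (m + i) + (p + 1) by ring, hper (m + i) (by omega)]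
  rw [Finset.sum_congr rfl hsum]
  ring

lemma Titer_eq_zero {β : ℝ} (hβ : 1 < β) {m : ℕ}
    (hz : ∀ i, m < i → tdigit β i = 0) : Titer β m = 0 := by
  have key : ∀ k : ℕ, β ^ k * Titer β m = Titer β (m + k) := by
    intro k
    rw [Titer_add β m k]
    have : ∀ i ∈ Finset.Icc 1 k, (tdigit β (m + i) : ℝ) * β ^ (k - i) = 0 := by
      intro i hi
      simp only [Finset.mem_Icc] at hi
      rw [hz (m + i) (by omega)]; simp
    rw [Finset.sum_congr rfl this]; simp
  by_contra hne
  have hx : 0 < Titer β m := lt_of_le_of_ne (Titer_nonneg β m) (Ne.symm hne)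
  obtain ⟨k, hk⟩ := pow_unbounded_of_one_lt ((Titer β m)⁻¹) hβ
  have h1 : β ^ k * Titer β m ≤ 1 := (key k) ▸ Titer_le_one β (m + k)
  rw [inv_lt_iff_one_lt_mul₀ hx] at hk
  linarith

lemma degree_tsum_lt (β : ℝ) (m n : ℕ) (h : m ≤ n) (hn : 1 ≤ n) :
    (∑ i ∈ Finset.Icc 1 m, C (tdigit β i) * X ^ (m - i)).degree < (n : WithBot ℕ) := by
  apply lt_of_le_of_lt (degree_sum_le _ _)
  rw [Finset.sup_lt_iff (by exact_mod_cast WithBot.bot_lt_coe n)]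
  intro i hi
  simp only [Finset.mem_Icc] at hi
  apply lt_of_le_of_lt (degree_C_mul_X_pow_le _ _)
  exact_mod_cast Nat.lt_of_lt_of_le (by omega) h

lemma monic_simpleParryPoly (β : ℝ) (m : ℕ) (hm : 1 ≤ m) :
    (simpleParryPoly β m).Monic :=
  monic_X_pow_sub (degree_tsum_lt β m m le_rfl hm)

lemma coeff_zero_tsum (β : ℝ) (m : ℕ) (hm : 1 ≤ m) :
    (∑ i ∈ Finset.Icc 1 m, C (tdigit β i) * X ^ (m - i)).coeff 0 = tdigit β m := by
  rw [finset_sum_coeff]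
  rw [Finset.sum_eq_single m]
  · simp
  · intro i hi hne
    simp only [Finset.mem_Icc] at hi
    rw [coeff_C_mul, coeff_X_pow, if_neg (by omega)]
    ring
  · intro h
    simp only [Finset.mem_Icc] at h
    omega

lemma coeff_zero_simpleParryPoly (β : ℝ) (m : ℕ) (hm : 1 ≤ m) :
    (simpleParryPoly β m).coeff 0 = - tdigit β m := by
  simp only [simpleParryPoly, coeff_sub, coeff_zero_tsum β m hm, coeff_X_pow,
    if_neg (by omega : ¬ (0 = m))]
  ring

lemma aeval_tsum (β : ℝ) (m : ℕ) :
    aeval β (∑ i ∈ Finset.Icc 1 m, C (tdigit β i) * X ^ (m - i))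
      = ∑ i ∈ Finset.Icc 1 m, (tdigit β i : ℝ) * β ^ (m - i) := by
  rw [map_sum]
  apply Finset.sum_congr rfl
  intro i _
  simp

lemma aeval_simpleParryPoly (β : ℝ) (m : ℕ) :
    aeval β (simpleParryPoly β m) = Titer β m := by
  have := Titer_add β 0 m
  simp only [Nat.zero_add, Titer] at this
  simp only [simpleParryPoly, map_sub, map_pow, aeval_X, aeval_tsum]
  rw [this]
  simp

lemma monic_nonsimpleParryPoly (β : ℝ) (m p : ℕ) :
    (nonsimpleParryPoly β m p).Monic := by
  have : nonsimpleParryPoly β m p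
      = X ^ (m + p + 1) -
        ((∑ i ∈ Finset.Icc 1 (m + p + 1), C (tdigit β i) * X ^ (m + p + 1 - i))
          + X ^ m - ∑ i ∈ Finset.Icc 1 m, C (tdigit β i) * X ^ (m - i)) := by
    rw [nonsimpleParryPoly]; ring
  rw [this]
  apply monic_X_pow_sub
  have h1 := degree_tsum_lt β (m + p + 1) (m + p + 1) le_rfl (by omega)
  have h2 := degree_tsum_lt β m (m + p + 1) (by omega) (by omega)
  have h3 : (X ^ m : ℤ[X]).degree < ((m + p + 1 : ℕ) : WithBot ℕ) := by
    rw [degree_X_pow]; exact_mod_cast by omega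
  calc _ ≤ _ := degree_sub_le _ _
    _ < _ := max_lt (lt_of_le_of_lt (degree_add_le _ _) (max_lt h1 h3)) h2

lemma coeff_zero_nonsimpleParryPoly_zero (β : ℝ) (p : ℕ) :
    (nonsimpleParryPoly β 0 p).coeff 0 = - tdigit β (p + 1) - 1 := by
  simp only [nonsimpleParryPoly, coeff_add, coeff_sub,
    coeff_zero_tsum β (0 + p + 1) (by omega), coeff_X_pow]
  norm_num

lemma coeff_zero_nonsimpleParryPoly_pos (β : ℝ) (m p : ℕ) (hm : 1 ≤ m) :
    (nonsimpleParryPoly β m p).coeff 0 = tdigit β m - tdigit β (m + p + 1) := by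
  simp only [nonsimpleParryPoly, coeff_add, coeff_sub,
    coeff_zero_tsum β (m + p + 1) (by omega), coeff_zero_tsum β m hm, coeff_X_pow,
    if_neg (by omega : ¬ (0 = m + p + 1)), if_neg (by omega : ¬ (0 = m))]
  ring

lemma aeval_nonsimpleParryPoly (β : ℝ) (m p : ℕ) :
    aeval β (nonsimpleParryPoly β m p) = Titer β (m + p + 1) - Titer β m := by
  have key : ∀ k : ℕ, Titer β k
      = β ^ k - ∑ i ∈ Finset.Icc 1 k, (tdigit β i : ℝ) * β ^ (k - i) := by
    intro k
    have := Titer_add β 0 k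
    simp only [Nat.zero_add, Titer] at this
    rw [this]; rw [mul_one]
  simp only [nonsimpleParryPoly, map_add, map_sub, map_pow, aeval_X, aeval_tsum]
  rw [key (m + p + 1), key m]
  ring

lemma parry_facts {β : ℝ} {P : Polynomial ℤ} (hP : IsParryPolyOf β P) :
    P.Monic ∧ P.coeff 0 ≠ 0 ∧ aeval β P = 0 := by
  obtain ⟨hβ, -, hcase⟩ := hP
  rcases hcase with ⟨m, hm, htm, hz, rfl⟩ | ⟨-, m, p, hper, -, hmin, rfl⟩
  · refine ⟨monic_simpleParryPoly β m hm, ?_, ?_⟩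
    · rw [coeff_zero_simpleParryPoly β m hm]
      simpa using htm
    · rw [aeval_simpleParryPoly, Titer_eq_zero hβ hz]
  · refine ⟨monic_nonsimpleParryPoly β m p, ?_, ?_⟩
    · rcases Nat.eq_zero_or_pos m with rfl | hm
      · rw [coeff_zero_nonsimpleParryPoly_zero]
        have := tdigit_nonneg (by linarith : (0:ℝ) < β) (p + 1)
        omega
      · rw [coeff_zero_nonsimpleParryPoly_pos β m p hm]
        have hne : tdigit β (m + (p + 1)) ≠ tdigit β m := by
          intro heq
          refine hmin (m - 1) (by omega) ?_
          intro i hi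
          rcases Nat.lt_or_ge i (m + 1) with h | h
          · have : i = m := by omega
            subst this; exact heq
          · exact hper i h
        intro h0
        apply hne
        have : m + (p + 1) = m + p + 1 := by ring
        rw [this]; omega
    · rw [aeval_nonsimpleParryPoly, Titer_periodic hβ hper]
      ring

lemma algNormAbs_int {x : ℂ} (hx : IsIntegral ℤ x) :
    algNormAbs x = |((minpoly ℤ x).coeff 0 : ℝ)| := by
  have hxq : IsIntegral ℚ x := hx.tower_top
  set q := (minpoly ℚ x).map (algebraMap ℚ ℂ) with hqdef
  have hq : q.Monic := (minpoly.monic hxq).map _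
  have hsp : q.Splits := IsAlgClosed.splits q
  have h0 := hsp.coeff_zero_eq_prod_roots_of_monic hq
  have h1 : algNormAbs x = ‖q.roots.prod‖ := by
    rw [algNormAbs, ← hqdef]
    exact (map_multiset_prod (normHom (α := ℂ)) _).symm
  have h2 : ‖q.coeff 0‖ = ‖q.roots.prod‖ := by
    rw [h0, norm_mul, norm_pow]
    simp
  have h3 : q.coeff 0 = (((minpoly ℤ x).coeff 0 : ℚ) : ℂ) := by
    rw [hqdef, coeff_map, minpoly.isIntegrallyClosed_eq_field_fractions' ℚ hx, coeff_map]
    norm_num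
  rw [h1, ← h2, h3]
  push_cast
  norm_cast

lemma minpoly_int_complex_eq (β : ℝ) :
    minpoly ℤ (β : ℂ) = minpoly ℤ β := by
  have : (β : ℂ) = algebraMap ℝ ℂ β := rfl
  rw [this, minpoly.algebraMap_eq (algebraMap ℝ ℂ).injective]

lemma minpoly_rat_complex_eq (β : ℝ) :
    minpoly ℚ (β : ℂ) = minpoly ℚ β := by
  have : (β : ℂ) = algebraMap ℝ ℂ β := rfl
  rw [this, minpoly.algebraMap_eq (algebraMap ℝ ℂ).injective]


/-- If `|N(β)| ≥ H(n*_β)/3`, then every beta-conjugate of the Parry number `β` which is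
not an algebraic unit is a simple root of the Parry polynomial `n*_β`. -/
theorem betaConjugate_simple_of_norm_large (β : ℝ) (P : Polynomial ℤ)
    (hP : IsParryPolyOf β P)
    (hnorm : polyHeight P / 3 ≤ algNormAbs (β : ℂ)) (ξ : ℂ) (hroot : (P.map (Int.castRingHom ℂ)).IsRoot ξ)
    (hnotconj : (Polynomial.aeval ξ) (minpoly ℚ β) ≠ 0)
    (hnotunit : algNormAbs ξ ≠ 1) :
    Polynomial.rootMultiplicity ξ (P.map (Int.castRingHom ℂ)) = 1 := by
  obtain ⟨hmonic, hc0, haev⟩ := parry_facts hP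
  set Pc := P.map (Int.castRingHom ℂ) with hPcdef
  have hPc0 : Pc ≠ 0 := (hmonic.map _).ne_zero
  have h1le : 1 ≤ rootMultiplicity ξ Pc := (rootMultiplicity_pos hPc0).mpr hroot
  by_contra hne
  have h2le : 2 ≤ rootMultiplicity ξ Pc := by omega
  have hsq : (X - C ξ) ^ 2 ∣ Pc :=
    (pow_dvd_pow _ h2le).trans (pow_rootMultiplicity_dvd Pc ξ)
  -- integrality
  have hβint : IsIntegral ℤ β := ⟨P, hmonic, by rwa [← aeval_def]⟩
  have hξint : IsIntegral ℤ ξ := ⟨P, hmonic, by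
    rw [eval₂_eq_eval_map]
    rw [show (algebraMap ℤ ℂ) = Int.castRingHom ℂ from RingHom.ext_int _ _]
    exact hroot⟩
  have hβq : IsIntegral ℚ β := hβint.tower_top
  have hξq : IsIntegral ℚ ξ := hξint.tower_top
  -- over ℚ
  set Pq := P.map (Int.castRingHom ℚ) with hPqdef
  have hmapc : Pq.map (algebraMap ℚ ℂ) = Pc := by
    rw [hPqdef, map_map]
    exact congrArg (fun f => Polynomial.map f P) (Subsingleton.elim _ _)
  set A := minpoly ℚ β with hAdef
  set B := minpoly ℚ ξ with hBdef
  have hInt2Q : Int.castRingHom ℚ = algebraMap ℤ ℚ := RingHom.ext_int _ _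
  have hA_dvd : A ∣ Pq := by
    apply minpoly.dvd
    rw [hPqdef, hInt2Q, aeval_map_algebraMap]
    exact haev
  have haevPqξ : aeval ξ Pq = 0 := by
    rw [aeval_def, ← eval_map, hmapc]
    exact hroot
  have hB_dvd : B ∣ Pq := minpoly.dvd ℚ ξ haevPqξ
  have hderξ : Pc.derivative.eval ξ = 0 := by
    obtain ⟨g, hg⟩ := hsq
    rw [hg, derivative_mul, derivative_pow]
    simp
  have hB_dvd_der : B ∣ Pq.derivative := by
    apply minpoly.dvd
    rw [aeval_def, ← eval_map, ← derivative_map, hmapc]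
    exact hderξ
  have hBirr : Irreducible B := minpoly.irreducible hξq
  have hAirr : Irreducible A := minpoly.irreducible hβq
  have hBprime : Prime B := hBirr.prime
  have hBne : B ≠ 0 := (minpoly.monic hξq).ne_zero
  have hBderne : B.derivative ≠ 0 := by
    intro h
    have h1 := natDegree_eq_zero_of_derivative_eq_zero h
    have h2 : 0 < B.natDegree := minpoly.natDegree_pos hξq
    omega
  have hB_ndvd_der : ¬ B ∣ B.derivative := by
    intro hd
    have h1 := degree_le_of_dvd hd hBderne
    have h2 := degree_derivative_lt hBne
    exact absurd (lt_of_le_of_lt h1 h2) (lt_irrefl _)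
  have hB2 : B ^ 2 ∣ Pq := by
    obtain ⟨Q, hQ⟩ := hB_dvd
    have hd : B ∣ B.derivative * Q := by
      have : B.derivative * Q = Pq.derivative - B * Q.derivative := by
        rw [hQ, derivative_mul]; ring
      rw [this]
      exact dvd_sub hB_dvd_der (Dvd.intro _ rfl)
    rcases hBprime.dvd_mul.mp hd with h | h
    · exact absurd h hB_ndvd_der
    · obtain ⟨S, hS⟩ := h
      exact ⟨S, by rw [hQ, hS]; ring⟩
  have hAB : A ≠ B := by
    intro h
    exact hnotconj (h ▸ minpoly.aeval ℚ ξ)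
  have hndvd : ¬ A ∣ B := by
    intro hd
    exact hAB (eq_of_monic_of_associated (minpoly.monic hβq) (minpoly.monic hξq)
      (hAirr.associated_of_dvd hBirr hd))
  have hcop : IsCoprime A B := (hAirr.coprime_iff_not_dvd).mpr hndvd
  have hABdvd : A * B ^ 2 ∣ Pq := (hcop.pow_right).mul_dvd hA_dvd hB2
  -- pull back to ℤ
  set A₀ := minpoly ℤ β with hA0def
  set B₀ := minpoly ℤ ξ with hB0def
  set D := A₀ * B₀ ^ 2 with hDdef
  have hDmonic : D.Monic := (minpoly.monic hβint).mul ((minpoly.monic hξint).pow _)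
  have hDmap : D.map (Int.castRingHom ℚ) = A * B ^ 2 := by
    rw [hDdef, Polynomial.map_mul, Polynomial.map_pow, hInt2Q,
      ← minpoly.isIntegrallyClosed_eq_field_fractions' ℚ hβint,
      ← minpoly.isIntegrallyClosed_eq_field_fractions' ℚ hξint]
  have hABmonic : (A * B ^ 2).Monic := (minpoly.monic hβq).mul ((minpoly.monic hξq).pow _)
  have hDdvdP : D ∣ P := by
    have h0 : Pq %ₘ (A * B ^ 2) = 0 := (modByMonic_eq_zero_iff_dvd hABmonic).mpr hABdvd
    have hmap := map_modByMonic (Int.castRingHom ℚ) hDmonic (p := P)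
    rw [hDmap, ← hPqdef, h0] at hmap
    rw [← modByMonic_eq_zero_iff_dvd hDmonic]
    apply Polynomial.map_injective (Int.castRingHom ℚ) (fun x y hxy => Int.cast_injective hxy)
    rw [hmap, Polynomial.map_zero]
  obtain ⟨R, hR⟩ := hDdvdP
  have hcoeff : P.coeff 0 = A₀.coeff 0 * (B₀.coeff 0) ^ 2 * R.coeff 0 := by
    rw [hR, hDdef]
    rw [mul_coeff_zero, mul_coeff_zero, pow_two, mul_coeff_zero, ← pow_two]
  set a := A₀.coeff 0 with hadef
  set b := B₀.coeff 0 with hbdef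
  set r := R.coeff 0 with hrdef
  have ha0 : a ≠ 0 := by rintro h; rw [hcoeff, h] at hc0; simp at hc0
  have hb0 : b ≠ 0 := by rintro h; rw [hcoeff, h] at hc0; simp at hc0
  have hr0 : r ≠ 0 := by rintro h; rw [hcoeff, h] at hc0; simp at hc0
  -- norms
  have hβcint : IsIntegral ℤ (β : ℂ) := hβint.map (IsScalarTower.toAlgHom ℤ ℝ ℂ)
  have han : algNormAbs (β : ℂ) = |(a : ℝ)| := by
    rw [algNormAbs_int hβcint, minpoly_int_complex_eq]
  have hbn : algNormAbs ξ = |(b : ℝ)| := by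
    rw [algNormAbs_int hξint]
  have hb2 : 2 ≤ |b| := by
    have h1 : 1 ≤ |b| := Int.one_le_abs hb0
    have hne1 : |b| ≠ 1 := by
      intro h
      apply hnotunit
      rw [hbn]
      rw [← Int.cast_abs, h]
      norm_num
    omega
  -- height bound
  have hH : |(P.coeff 0 : ℝ)| ≤ polyHeight P := by
    apply Finset.le_sup' (f := fun j => |(P.coeff j : ℝ)|)
    exact Finset.mem_range.mpr (Nat.succ_pos _)
  -- final contradiction
  have hineq : (4 : ℤ) * |a| ≤ |P.coeff 0| := by
    rw [hcoeff, abs_mul, abs_mul, abs_pow]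
    have h1 : 1 ≤ |a| := Int.one_le_abs ha0
    have h2 : 1 ≤ |r| := Int.one_le_abs hr0
    have hb4 : 4 ≤ |b| ^ 2 := by nlinarith
    calc 4 * |a| ≤ |a| * |b| ^ 2 := by nlinarith
      _ ≤ |a| * |b| ^ 2 * |r| := le_mul_of_one_le_right (by positivity) h2
  have hineqR : (4 : ℝ) * |(a : ℝ)| ≤ |(P.coeff 0 : ℝ)| := by
    exact_mod_cast hineq
  have hnormR : polyHeight P ≤ 3 * |(a : ℝ)| := by
    rw [han] at hnorm
    linarith
  have ha1 : (1 : ℝ) ≤ |(a : ℝ)| := by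
    have := Int.one_le_abs ha0
    rw [← Int.cast_abs]
    exact_mod_cast this
  linarith

end
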